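/- arXiv:2108.03282 — 3 statements merged into one kernel-verified Lean document; each statement's English description precedes it below -/
import Mathlib

section
/- Let B be a family of blocks in a monoid M with parameter type Θ and let n ≥ 1. For every parameter assignment θ for the triangle T_n and every parameter assignment φ for the zigzag L_{1,n}, there exists a parameter assignment ψ such that T_n(θ) * L_{1,n}(φ) = T_n(ψ); that is, a triangle of height n and a zigzag of height n can be merged into a triangle of height n. -/
/-- The cascade `C_{i,j}(θ) = B i (θ i) * B (i+1) (θ (i+1)) * ⋯ * B j (θ j)`. -/
def cascade {M Θ : Type*} [Monoid M] (B : ℕ → Θ → M) (i j : ℕ) (θ : ℕ → Θ) : M :=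
  ((List.range (j + 1 - i)).map (fun k => B (i + k) (θ (i + k)))).prod

/-- The triangle `T_n(θ) = C_{n,n} * C_{n-1,n} * ⋯ * C_{1,n}`, where the `k`-th cascade
`C_{n-k,n}` carries its own parameters `θ k`. -/
def triangle {M Θ : Type*} [Monoid M] (B : ℕ → Θ → M) (n : ℕ) (θ : ℕ → ℕ → Θ) : M :=
  ((List.range n).map (fun k => cascade B (n - k) n (θ k))).prod

/-- The zigzag `L_{1,n}(θ)`: the product of the odd-indexed blocks `B k (θ k)` for
`1 ≤ k ≤ n` (in increasing order of `k`), followed by the product of the even-indexed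
blocks `B k (θ k)` for `1 ≤ k ≤ n` (in increasing order of `k`). -/
def zigzag {M Θ : Type*} [Monoid M] (B : ℕ → Θ → M) (n : ℕ) (θ : ℕ → Θ) : M :=
  (((((List.range n).map (· + 1)).filter (fun k => k % 2 = 1)).map
      (fun k => B k (θ k))).prod) *
  (((((List.range n).map (· + 1)).filter (fun k => k % 2 = 0)).map
      (fun k => B k (θ k))).prod)

/-!
A triangle of height `n` absorbs any single block `B k α` with `1 ≤ k ≤ n`, hence any word in
such blocks, in particular a zigzag. Multiplied on the right of a cascade `C_{i,n}` with
`i ≤ m < n`, a block `B m` is carried to the left as a block `B (m + 1)`: one turnover on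
`B m * B (m + 1) * B m`, with commutation past the rest of the cascade. Pushed leftwards through
the cascades `C_{1,n}, C_{2,n}, …` of the triangle, `B k` thus climbs one index per cascade until
it becomes `B n`, which fuses into the last block of the next cascade.

Cascades and triangles are handled through their sets of values, which factor as
`range (cascade B i j) = range (B i) * range (cascade B (i + 1) j)`, so that parameters need
not be tracked along the argument.
-/

open Pointwise Set

namespace Blocks

variable {M Θ : Type*} [Monoid M] (B : ℕ → Θ → M)

def Fusion : Prop :=
  ∀ (i : ℕ) (α β : Θ), ∃ a : Θ, B i α * B i β = B i a

def Commutation : Prop :=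
  ∀ (i j : ℕ), 1 < Nat.dist i j → ∀ (α β : Θ), B i α * B j β = B j β * B i α

def Turnover : Prop :=
  ∀ (i : ℕ) (α β γ : Θ), ∃ a b c : Θ,
    B i α * B (i + 1) β * B i γ = B (i + 1) a * B i b * B (i + 1) c

end Blocks

section

variable {M Θ : Type*} [Monoid M] (B : ℕ → Θ → M)

lemma cascade_congr {i j : ℕ} {θ ψ : ℕ → Θ} (h : ∀ k, i ≤ k → k ≤ j → θ k = ψ k) :
    cascade B i j θ = cascade B i j ψ := by
  unfold cascade
  congr 1
  refine List.map_congr_left fun a ha => ?_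
  rw [List.mem_range] at ha
  rw [h (i + a) (Nat.le_add_right _ _) (by omega)]

lemma cascade_self (i : ℕ) (θ : ℕ → Θ) : cascade B i i θ = B i (θ i) := by
  simp [cascade]

lemma cascade_succ_left {i j : ℕ} (hij : i ≤ j) (θ : ℕ → Θ) :
    cascade B i j θ = B i (θ i) * cascade B (i + 1) j θ := by
  unfold cascade
  rw [show j + 1 - i = j + 1 - (i + 1) + 1 by omega, List.range_succ_eq_map]
  simp only [List.map_cons, List.prod_cons, List.map_map, Nat.add_zero]
  congr 3
  funext k
  simp only [Function.comp_apply, Nat.succ_eq_add_one, Nat.add_assoc, Nat.add_comm 1]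

lemma range_cascade_self (i : ℕ) : range (cascade B i i) = range (B i) := by
  ext x
  simp only [mem_range, cascade_self]
  exact ⟨fun ⟨θ, h⟩ => ⟨θ i, h⟩, fun ⟨α, h⟩ => ⟨fun _ => α, h⟩⟩

lemma range_cascade_succ_left {i j : ℕ} (hij : i ≤ j) :
    range (cascade B i j) = range (B i) * range (cascade B (i + 1) j) := by
  ext x
  simp only [mem_mul, mem_range, exists_exists_eq_and]
  constructor
  · rintro ⟨θ, rfl⟩
    exact ⟨θ i, θ, (cascade_succ_left B hij θ).symm⟩
  · rintro ⟨α, θ, rfl⟩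
    refine ⟨Function.update θ i α, ?_⟩
    rw [cascade_succ_left B hij, Function.update_self]
    exact congrArg _ (cascade_congr B fun k hk _ => Function.update_of_ne (by omega) _ _)

lemma Blocks.Commutation.commute_of_mem_range_cascade (hcomm : Blocks.Commutation B)
    {m i j : ℕ} (hmi : m + 1 < i) (α : Θ) {z : M} (hz : z ∈ range (cascade B i j)) :
    Commute (B m α) z := by
  obtain ⟨θ, rfl⟩ := hz
  refine Commute.list_prod_right _ _ fun x hx => ?_
  obtain ⟨k, -, rfl⟩ := List.mem_map.mp hx
  exact hcomm m (i + k) (by rw [Nat.dist_eq_sub_of_le (by omega)]; omega) α _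

lemma Blocks.Fusion.mul_mem_range_cascade (hfusion : Blocks.Fusion B) {i n : ℕ} (hin : i ≤ n)
    {x : M} (hx : x ∈ range (cascade B i n)) (α : Θ) : x * B n α ∈ range (cascade B i n) := by
  induction hin using Nat.decreasingInduction generalizing x with
  | self =>
    rw [range_cascade_self] at hx ⊢
    obtain ⟨β, rfl⟩ := hx
    obtain ⟨a, ha⟩ := hfusion n β α
    exact ⟨a, ha.symm⟩
  | of_succ i hin ih =>
    rw [range_cascade_succ_left B hin.le] at hx ⊢
    obtain ⟨b, hb, y, hy, rfl⟩ := hx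
    rw [mul_assoc]
    exact mul_mem_mul hb (ih hy)

lemma exists_cascade_mul_block_eq (hcomm : Blocks.Commutation B) (hturnover : Blocks.Turnover B)
    {i m n : ℕ} (him : i ≤ m) (hmn : m < n) {x : M} (hx : x ∈ range (cascade B i n)) (α : Θ) :
    ∃ β, ∃ y ∈ range (cascade B i n), x * B m α = B (m + 1) β * y := by
  induction him using Nat.decreasingInduction generalizing x with
  | self =>
    have hsplit : range (cascade B m n) = range (B m) * (range (B (m + 1)) *
        range (cascade B (m + 2) n)) := by
      rw [range_cascade_succ_left B hmn.le, range_cascade_succ_left B hmn]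
    rw [hsplit] at hx ⊢
    obtain ⟨_, ⟨a, rfl⟩, _, ⟨_, ⟨b, rfl⟩, z, hz, rfl⟩, rfl⟩ := hx
    obtain ⟨a', b', c', habc⟩ := hturnover m a b α
    refine ⟨a', B m b' * (B (m + 1) c' * z),
      mul_mem_mul ⟨b', rfl⟩ (mul_mem_mul ⟨c', rfl⟩ hz), ?_⟩
    calc B m a * (B (m + 1) b * z) * B m α
        = B m a * B (m + 1) b * B m α * z := by
          rw [mul_assoc (B m a), mul_assoc (B (m + 1) b),
            ← (hcomm.commute_of_mem_range_cascade B (by omega) α hz).eq]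
          simp only [mul_assoc]
      _ = B (m + 1) a' * (B m b' * (B (m + 1) c' * z)) := by
          rw [habc]
          simp only [mul_assoc]
  | of_succ i him ih =>
    rw [range_cascade_succ_left B (him.le.trans hmn.le)] at hx ⊢
    obtain ⟨_, ⟨a, rfl⟩, z, hz, rfl⟩ := hx
    obtain ⟨β, y, hy, h⟩ := ih hz
    refine ⟨β, B i a * y, mul_mem_mul ⟨a, rfl⟩ hy, ?_⟩
    rw [mul_assoc, h, ← mul_assoc, ← mul_assoc,
      hcomm i (m + 1) (by rw [Nat.dist_eq_sub_of_le (by omega)]; omega) a β]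

def partialTriangle (n j : ℕ) (θ : ℕ → ℕ → Θ) : M :=
  ((List.range j).map fun k => cascade B (j - k) n (θ k)).prod

lemma triangle_eq_partialTriangle (n : ℕ) : triangle B n = partialTriangle B n n := rfl

lemma partialTriangle_zero (n : ℕ) (θ : ℕ → ℕ → Θ) : partialTriangle B n 0 θ = 1 := rfl

lemma partialTriangle_succ (n j : ℕ) (θ : ℕ → ℕ → Θ) :
    partialTriangle B n (j + 1) θ =
      cascade B (j + 1) n (θ 0) * partialTriangle B n j (fun k => θ (k + 1)) := by
  unfold partialTriangle
  rw [List.range_succ_eq_map, List.map_cons, List.prod_cons, List.map_map]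
  refine congrArg₂ _ (by rw [Nat.sub_zero]) (congrArg _ (List.map_congr_left fun k _ => ?_))
  simp only [Function.comp_apply, Nat.succ_eq_add_one, Nat.add_sub_add_right]

lemma range_partialTriangle_succ (n j : ℕ) :
    range (partialTriangle B n (j + 1)) =
      range (cascade B (j + 1) n) * range (partialTriangle B n j) := by
  ext x
  simp only [mem_mul, mem_range, exists_exists_eq_and]
  constructor
  · rintro ⟨θ, rfl⟩
    exact ⟨θ 0, fun k => θ (k + 1), (partialTriangle_succ B n j θ).symm⟩
  · rintro ⟨θ₀, θ, rfl⟩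
    exact ⟨fun k => Nat.casesOn k θ₀ θ, partialTriangle_succ B n j _⟩

lemma exists_partialTriangle_mul_block_eq (hcomm : Blocks.Commutation B)
    (hturnover : Blocks.Turnover B) {n j k : ℕ} (hk : 1 ≤ k) (hkj : k + j ≤ n) {x : M}
    (hx : x ∈ range (partialTriangle B n j)) (α : Θ) :
    ∃ β, ∃ y ∈ range (partialTriangle B n j), x * B k α = B (k + j) β * y := by
  induction j generalizing x with
  | zero =>
    obtain ⟨θ, rfl⟩ := hx
    exact ⟨α, _, ⟨θ, rfl⟩, by simp [partialTriangle_zero]⟩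
  | succ j ih =>
    rw [range_partialTriangle_succ] at hx ⊢
    obtain ⟨c, hc, t, ht, rfl⟩ := hx
    obtain ⟨β, t', ht', h⟩ := ih (by omega) ht
    obtain ⟨β', c', hc', h'⟩ :=
      exists_cascade_mul_block_eq B hcomm hturnover (m := k + j) (by omega) (by omega) hc β
    refine ⟨β', c' * t', mul_mem_mul hc' ht', ?_⟩
    rw [mul_assoc, h, ← mul_assoc, h', mul_assoc]
    rfl

lemma mul_block_mem_range_partialTriangle (hfusion : Blocks.Fusion B)
    (hcomm : Blocks.Commutation B) (hturnover : Blocks.Turnover B) {n j k : ℕ}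
    (hk : 1 ≤ k) (hkn : k ≤ n) (hnj : n < k + j) {x : M}
    (hx : x ∈ range (partialTriangle B n j)) (α : Θ) :
    x * B k α ∈ range (partialTriangle B n j) := by
  induction j generalizing x with
  | zero => omega
  | succ j ih =>
    rw [range_partialTriangle_succ] at hx ⊢
    obtain ⟨c, hc, t, ht, rfl⟩ := hx
    rw [mul_assoc]
    rcases (by omega : n < k + j ∨ k + j = n) with hlt | heq
    · exact mul_mem_mul hc (ih hlt ht)
    · obtain ⟨β, t', ht', h⟩ :=
        exists_partialTriangle_mul_block_eq B hcomm hturnover hk heq.le ht α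
      rw [h, ← mul_assoc, heq]
      exact mul_mem_mul (hfusion.mul_mem_range_cascade B (by omega) hc β) ht'

def blocksBetween (i j : ℕ) : Set M :=
  {b | ∃ k α, i ≤ k ∧ k ≤ j ∧ B k α = b}

lemma mul_mem_range_triangle (hfusion : Blocks.Fusion B) (hcomm : Blocks.Commutation B)
    (hturnover : Blocks.Turnover B) {n : ℕ} {x y : M} (hx : x ∈ range (triangle B n))
    (hy : y ∈ Submonoid.closure (blocksBetween B 1 n)) : x * y ∈ range (triangle B n) := by
  rw [triangle_eq_partialTriangle] at hx ⊢
  induction hy using Submonoid.closure_induction_right with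
  | one => simpa using hx
  | mul_right y _ b hb ih =>
    obtain ⟨k, α, hk, hkn, rfl⟩ := hb
    rw [← mul_assoc]
    exact mul_block_mem_range_partialTriangle B hfusion hcomm hturnover hk hkn
      (j := n) (by omega) ih α

lemma zigzag_mem_closure (n : ℕ) (φ : ℕ → Θ) :
    zigzag B n φ ∈ Submonoid.closure (blocksBetween B 1 n) := by
  have hblocks (p : ℕ → Bool) :
      ∀ b ∈ (((List.range n).map (· + 1)).filter p).map (fun k => B k (φ k)),
        b ∈ Submonoid.closure (blocksBetween B 1 n) := by
    intro b hb
    simp only [List.mem_map, List.mem_filter, List.mem_range] at hb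
    obtain ⟨_, ⟨⟨a, ha, rfl⟩, -⟩, rfl⟩ := hb
    exact Submonoid.subset_closure ⟨a + 1, φ (a + 1), by omega, by omega, rfl⟩
  exact mul_mem (list_prod_mem (hblocks _)) (list_prod_mem (hblocks _))

end

theorem triangle_absorbs_zigzag_general {M Θ : Type*} [Monoid M] (B : ℕ → Θ → M)
    (hfusion : ∀ (i : ℕ) (α β : Θ), ∃ a : Θ, B i α * B i β = B i a)
    (hcomm : ∀ (i j : ℕ), 1 < Nat.dist i j → ∀ (α β : Θ),
      B i α * B j β = B j β * B i α)
    (hturnover : ∀ (i : ℕ) (α β γ : Θ), ∃ a b c : Θ,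
      B i α * B (i + 1) β * B i γ = B (i + 1) a * B i b * B (i + 1) c)
    (n : ℕ) :
    ∀ (θ : ℕ → ℕ → Θ) (φ : ℕ → Θ), ∃ ψ : ℕ → ℕ → Θ,
      triangle B n θ * zigzag B n φ = triangle B n ψ := by
  intro θ φ
  obtain ⟨ψ, hψ⟩ := mul_mem_range_triangle B hfusion hcomm hturnover (mem_range_self θ)
    (zigzag_mem_closure B n φ)
  exact ⟨ψ, hψ.symm⟩

/-- **Corollary (triangle absorbs zigzag).**  Let `B` be a family of blocks in a monoid `M`
(satisfying fusion, commutation and turnover) and `n ≥ 1`.  A triangle of height `n` and a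
zigzag `L_{1,n}` can be merged into a triangle of height `n`. -/
theorem triangle_absorbs_zigzag {M Θ : Type*} [Monoid M] (B : ℕ → Θ → M)
    (hfusion : ∀ (i : ℕ) (α β : Θ), ∃ a : Θ, B i α * B i β = B i a)
    (hcomm : ∀ (i j : ℕ), 1 < Nat.dist i j → ∀ (α β : Θ),
      B i α * B j β = B j β * B i α)
    (hturnover : ∀ (i : ℕ) (α β γ : Θ), ∃ a b c : Θ,
      B i α * B (i + 1) β * B i γ = B (i + 1) a * B i b * B (i + 1) c)
    (n : ℕ) (hn : 1 ≤ n) :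
    ∀ (θ : ℕ → ℕ → Θ) (φ : ℕ → Θ), ∃ ψ : ℕ → ℕ → Θ,
      triangle B n θ * zigzag B n φ = triangle B n ψ :=
  triangle_absorbs_zigzag_general B hfusion hcomm hturnover n
end

section
/- Let B be a family of blocks in a monoid M with parameter type Θ that additionally satisfies the reverse turnover property: for all i and all a, b, c ∈ Θ there exist α, β, γ ∈ Θ with (B (i+1) a) * (B i b) * (B (i+1) c) = (B i α) * (B (i+1) β) * (B i γ). Let n be odd, n ≥ 1. Then for every parameter assignment θ for the triangle T_n there exists a parameter assignment φ such that T_n(θ) equals the square S_n(φ) := (C_{n−1,n} * C_{n−3,n} * ⋯ * C_{2,n}) * (C_{1,n} * C_{1,n−2} * ⋯ * C_{1,1}), where the first group runs over even first-indices k = n−1, n−3, …, 2 in decreasing order and the second group runs over odd second-indices k = n, n−2, …, 1 in decreasing order, each cascade with its own parameters from φ. -/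
/-- The square of odd height `n`:
`S_n = (C_{n-1,n} * C_{n-3,n} * ⋯ * C_{2,n}) * (C_{1,n} * C_{1,n-2} * ⋯ * C_{1,1})`,
where the first group runs over the even first-indices `k = n-1, n-3, …, 2` in decreasing
order (with parameters `φ₁ k`) and the second group runs over the odd second-indices
`k = n, n-2, …, 1` in decreasing order (with parameters `φ₂ k`). -/
def squareOdd {M Θ : Type*} [Monoid M] (B : ℕ → Θ → M) (n : ℕ)
    (φ₁ φ₂ : ℕ → ℕ → Θ) : M :=
  ((List.range ((n - 1) / 2)).map
      (fun t => cascade B (n - 1 - 2 * t) n (φ₁ (n - 1 - 2 * t)))).prod *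
  ((List.range ((n + 1) / 2)).map
      (fun t => cascade B 1 (n - 2 * t) (φ₂ (n - 2 * t)))).prod

/-!
Replace every block by the set of all its values. In the monoid `Set M` with the pointwise
product, the sets `G i = Set.range (B i)` satisfy far commutation and the braid relation
`G i * G (i+1) * G i = G (i+1) * G i * G (i+1)` (turnover gives `⊆`, reverse turnover `⊇`), and
the set of all triangles, resp. squares, is the same product with `G` in place of `B`. So it
suffices to show `T_n = S_n` for a family `g` satisfying the braid relations in any monoid.
There a cascade `C_{a,b}` conjugates `g i` to `g (i+1)` for `a ≤ i < b`, so pulling the long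
cascade `C_{1,n}` to the front shifts every cascade it passes down by one. This gives
`T_n = C_{1,n} T_{n-1}` and, pulling `C_{1,n}` and then `C_{1,n-1}`,
`S_n = C_{1,n} C_{1,n-1} S_{n-2}`, whence `T_n = S_n` by induction over odd `n`.
-/

open Pointwise

structure SatisfiesBraidRelations {N : Type*} [Monoid N] (g : ℕ → N) : Prop where
  comm : ∀ i j, 1 < Nat.dist i j → g i * g j = g j * g i
  braid : ∀ i, g i * g (i + 1) * g i = g (i + 1) * g i * g (i + 1)

theorem SemiconjBy.list_prod_map {N ι : Type*} [Monoid N] {a : N} {f f' : ι → N} :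
    ∀ l : List ι, (∀ i ∈ l, SemiconjBy a (f i) (f' i)) →
      SemiconjBy a (l.map f).prod (l.map f').prod
  | [], _ => SemiconjBy.one_right a
  | i :: l, h => by
    simpa using (h i (by simp)).mul_right
      (SemiconjBy.list_prod_map l fun j hj => h j (by simp [hj]))

theorem Set.range_list_prod_map {ι κ Θ M : Type*} [Monoid M] [Nonempty Θ] (f : ι → Θ → M)
    (e : ι → κ) : ∀ l : List ι, (l.map e).Nodup →
      Set.range (fun θ : κ → Θ => (l.map fun i => f i (θ (e i))).prod) =
        (l.map fun i => Set.range (f i)).prod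
  | [], _ => by simp [Set.singleton_one]
  | i :: l, hl => by
    classical
    rw [List.map_cons, List.nodup_cons] at hl
    rw [List.map_cons, List.prod_cons, ← Set.range_list_prod_map f e l hl.2]
    ext x
    simp only [List.map_cons, List.prod_cons, Set.mem_mul, Set.mem_range]
    constructor
    · rintro ⟨θ, rfl⟩
      exact ⟨_, ⟨θ (e i), rfl⟩, _, ⟨θ, rfl⟩, rfl⟩
    · rintro ⟨_, ⟨α, rfl⟩, _, ⟨θ, rfl⟩, rfl⟩
      refine ⟨Function.update θ (e i) α, ?_⟩
      rw [Function.update_self]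
      refine congrArg _ (congrArg _ (List.map_congr_left fun j hj => ?_))
      rw [Function.update_of_ne]
      exact fun h => hl.1 (h ▸ List.mem_map_of_mem hj)

section Products

variable {N : Type*} [Monoid N]

def ascProd (g : ℕ → N) (a b : ℕ) : N :=
  ((List.range (b + 1 - a)).map fun k => g (a + k)).prod

def triangleProd (g : ℕ → N) (n : ℕ) : N :=
  ((List.range n).map fun k => ascProd g (n - k) n).prod

def squareOddProd (g : ℕ → N) (n : ℕ) : N :=
  ((List.range ((n - 1) / 2)).map fun t => ascProd g (n - 1 - 2 * t) n).prod *
    ((List.range ((n + 1) / 2)).map fun t => ascProd g 1 (n - 2 * t)).prod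

theorem ascProd_eq_mul {g : ℕ → N} {a b : ℕ} (h : a ≤ b) :
    ascProd g a b = g a * ascProd g (a + 1) b := by
  rw [ascProd, show b + 1 - a = b + 1 - (a + 1) + 1 by omega, List.range_succ_eq_map]
  simp [ascProd, Function.comp_def, add_assoc, add_comm 1 _]

theorem squareOddProd_two_mul_add_one (g : ℕ → N) (m : ℕ) :
    squareOddProd g (2 * m + 1) =
      ((List.range m).map fun t => ascProd g (2 * (m - t)) (2 * m + 1)).prod *
        ((List.range (m + 1)).map fun t => ascProd g 1 (2 * (m - t) + 1)).prod := by
  rw [squareOddProd, show (2 * m + 1 - 1) / 2 = m by omega,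
    show (2 * m + 1 + 1) / 2 = m + 1 by omega]
  congr 2 <;> refine List.map_congr_left fun t ht => ?_ <;> rw [List.mem_range] at ht <;>
    congr 1 <;> omega

end Products

namespace SatisfiesBraidRelations

variable {N : Type*} [Monoid N] {g : ℕ → N}

theorem commute_ascProd (hg : SatisfiesBraidRelations g) {i a b : ℕ}
    (h : ∀ j, a ≤ j → j ≤ b → 1 < Nat.dist i j) : Commute (g i) (ascProd g a b) := by
  refine Commute.list_prod_right _ _ fun y hy => ?_
  obtain ⟨k, hk, rfl⟩ := List.mem_map.1 hy
  exact hg.comm i _ (h _ (by omega) (by rw [List.mem_range] at hk; omega))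

theorem semiconjBy_ascProd (hg : SatisfiesBraidRelations g) {a b i : ℕ} (hai : a ≤ i)
    (hib : i < b) : SemiconjBy (ascProd g a b) (g i) (g (i + 1)) := by
  obtain ⟨d, rfl⟩ := Nat.exists_eq_add_of_le hai
  induction d generalizing a with
  | zero =>
    rw [Nat.add_zero] at hib ⊢
    rw [ascProd_eq_mul hib.le, ascProd_eq_mul hib]
    have hc : Commute (g a) (ascProd g (a + 1 + 1) b) :=
      hg.commute_ascProd fun j hj _ => by simp only [Nat.dist]; omega
    unfold SemiconjBy
    calc g a * (g (a + 1) * ascProd g (a + 1 + 1) b) * g a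
        = g a * g (a + 1) * g a * ascProd g (a + 1 + 1) b := by
          simp only [mul_assoc, hc.symm.eq]
      _ = g (a + 1) * g a * g (a + 1) * ascProd g (a + 1 + 1) b := by rw [hg.braid]
      _ = g (a + 1) * (g a * (g (a + 1) * ascProd g (a + 1 + 1) b)) := by
          simp only [mul_assoc]
  | succ d ih =>
    have ih' := ih (a := a + 1) (by omega) (by omega)
    rw [show a + 1 + d = a + (d + 1) by omega] at ih'
    rw [ascProd_eq_mul (by omega)]
    exact SemiconjBy.mul_left (hg.comm a _ (by simp only [Nat.dist]; omega)) ih'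

theorem semiconjBy_ascProd_ascProd (hg : SatisfiesBraidRelations g) {a b k m : ℕ} (hak : a ≤ k)
    (hkm : k ≤ m) (hmb : m < b) :
    SemiconjBy (ascProd g a b) (ascProd g k m) (ascProd g (k + 1) (m + 1)) := by
  unfold ascProd
  rw [Nat.add_sub_add_right]
  refine SemiconjBy.list_prod_map _ fun j hj => ?_
  rw [List.mem_range] at hj
  rw [Nat.add_right_comm]
  exact hg.semiconjBy_ascProd (by omega) (by omega)

theorem prod_ascProd_mul_ascProd {ι : Type*} (hg : SatisfiesBraidRelations g) {a b : ℕ}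
    (l : List ι) (p q : ι → ℕ) (h : ∀ i ∈ l, a ≤ p i ∧ p i ≤ q i ∧ q i < b) :
    (l.map fun i => ascProd g (p i + 1) (q i + 1)).prod * ascProd g a b =
      ascProd g a b * (l.map fun i => ascProd g (p i) (q i)).prod :=
  (SemiconjBy.list_prod_map l fun i hi =>
    hg.semiconjBy_ascProd_ascProd (h i hi).1 (h i hi).2.1 (h i hi).2.2).eq.symm

theorem triangleProd_succ (hg : SatisfiesBraidRelations g) (n : ℕ) :
    triangleProd g (n + 1) = ascProd g 1 (n + 1) * triangleProd g n :=
  calc triangleProd g (n + 1)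
      = ((List.range n).map fun k => ascProd g (n - k + 1) (n + 1)).prod *
          ascProd g 1 (n + 1) := by
        rw [triangleProd, List.range_succ, List.map_append, List.prod_append, List.map_singleton,
          List.prod_singleton, Nat.add_sub_cancel_left]
        congr 1
        refine congrArg _ (List.map_congr_left fun k hk => ?_)
        rw [List.mem_range] at hk
        rw [Nat.sub_add_comm hk.le]
    _ = ascProd g 1 (n + 1) * triangleProd g n :=
        hg.prod_ascProd_mul_ascProd _ _ _ fun k hk => by rw [List.mem_range] at hk; omega

theorem squareOddProd_add_two (hg : SatisfiesBraidRelations g) {n : ℕ} (hn : Odd n) :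
    squareOddProd g (n + 2) = ascProd g 1 (n + 2) * ascProd g 1 (n + 1) * squareOddProd g n := by
  obtain ⟨s, rfl⟩ := hn
  have hlower : ((List.range (s + 1 + 1)).map fun t => ascProd g 1 (2 * (s + 1 - t) + 1)).prod =
      ascProd g 1 (2 * (s + 1) + 1) *
        ((List.range (s + 1)).map fun t => ascProd g 1 (2 * (s - t) + 1)).prod := by
    rw [List.range_succ_eq_map]
    simp only [List.map_cons, List.prod_cons, List.map_map, Function.comp_def,
      Nat.succ_eq_add_one, Nat.add_sub_add_right, Nat.sub_zero]
  have hupper :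
      ((List.range (s + 1)).map fun t => ascProd g (2 * (s + 1 - t)) (2 * (s + 1) + 1)).prod *
        ascProd g 1 (2 * (s + 1) + 1) =
      ascProd g 1 (2 * (s + 1) + 1) * (ascProd g 1 (2 * s + 1 + 1) *
        ((List.range s).map fun t => ascProd g (2 * (s - t)) (2 * s + 1)).prod) :=
    calc _ = ((List.range (s + 1)).map fun t =>
              ascProd g (2 * (s - t) + 1 + 1) (2 * s + 1 + 1 + 1)).prod *
            ascProd g 1 (2 * (s + 1) + 1) := by
          congr 2
          refine List.map_congr_left fun t ht => ?_
          rw [List.mem_range] at ht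
          congr 1; omega
      _ = ascProd g 1 (2 * (s + 1) + 1) *
            ((List.range (s + 1)).map fun t => ascProd g (2 * (s - t) + 1) (2 * s + 1 + 1)).prod :=
          hg.prod_ascProd_mul_ascProd _ _ _ fun t ht => by rw [List.mem_range] at ht; omega
      _ = ascProd g 1 (2 * (s + 1) + 1) *
            (((List.range s).map fun t => ascProd g (2 * (s - t) + 1) (2 * s + 1 + 1)).prod *
              ascProd g 1 (2 * s + 1 + 1)) := by
          rw [List.range_succ, List.map_append, List.prod_append, List.map_singleton,
            List.prod_singleton, Nat.sub_self]
      _ = _ := congrArg _ <|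
          hg.prod_ascProd_mul_ascProd _ _ _ fun t ht => by rw [List.mem_range] at ht; omega
  rw [show 2 * s + 1 + 2 = 2 * (s + 1) + 1 by ring, squareOddProd_two_mul_add_one,
    squareOddProd_two_mul_add_one, hlower, ← mul_assoc, hupper]
  simp only [mul_assoc]

theorem triangleProd_eq_squareOddProd (hg : SatisfiesBraidRelations g) {n : ℕ} (hn : Odd n) :
    triangleProd g n = squareOddProd g n := by
  obtain ⟨s, rfl⟩ := hn
  induction s with
  | zero => simp [triangleProd, squareOddProd]
  | succ s ih =>
    rw [show 2 * (s + 1) + 1 = 2 * s + 1 + 2 by ring,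
      hg.squareOddProd_add_two (odd_two_mul_add_one s), ← ih, hg.triangleProd_succ,
      hg.triangleProd_succ, mul_assoc]

end SatisfiesBraidRelations

section Blocks

variable {M Θ : Type*} [Monoid M] (B : ℕ → Θ → M)

theorem satisfiesBraidRelations_range
    (hcomm : ∀ (i j : ℕ), 1 < Nat.dist i j → ∀ (α β : Θ), B i α * B j β = B j β * B i α)
    (hturnover : ∀ (i : ℕ) (α β γ : Θ), ∃ a b c : Θ,
      B i α * B (i + 1) β * B i γ = B (i + 1) a * B i b * B (i + 1) c)
    (hrevturnover : ∀ (i : ℕ) (a b c : Θ), ∃ α β γ : Θ,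
      B (i + 1) a * B i b * B (i + 1) c = B i α * B (i + 1) β * B i γ) :
    SatisfiesBraidRelations fun i => Set.range (B i) where
  comm i j hij := by
    ext x
    simp only [Set.mem_mul, Set.mem_range]
    constructor <;> rintro ⟨_, ⟨α, rfl⟩, _, ⟨β, rfl⟩, rfl⟩
    · exact ⟨_, ⟨β, rfl⟩, _, ⟨α, rfl⟩, (hcomm i j hij α β).symm⟩
    · exact ⟨_, ⟨β, rfl⟩, _, ⟨α, rfl⟩, hcomm i j hij β α⟩
  braid i := by
    ext x
    simp only [Set.mem_mul, Set.mem_range]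
    constructor <;> rintro ⟨_, ⟨_, ⟨α, rfl⟩, _, ⟨β, rfl⟩, rfl⟩, _, ⟨γ, rfl⟩, rfl⟩
    · obtain ⟨a, b, c, h⟩ := hturnover i α β γ
      exact ⟨_, ⟨_, ⟨a, rfl⟩, _, ⟨b, rfl⟩, rfl⟩, _, ⟨c, rfl⟩, h.symm⟩
    · obtain ⟨a, b, c, h⟩ := hrevturnover i α β γ
      exact ⟨_, ⟨_, ⟨a, rfl⟩, _, ⟨b, rfl⟩, rfl⟩, _, ⟨c, rfl⟩, h.symm⟩

variable [Nonempty Θ]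

theorem range_cascade (a b : ℕ) :
    Set.range (cascade B a b) = ascProd (fun i => Set.range (B i)) a b :=
  Set.range_list_prod_map (fun k => B (a + k)) (a + ·) _
    (List.nodup_range.map (add_right_injective a))

theorem range_triangle (n : ℕ) :
    Set.range (triangle B n) = triangleProd (fun i => Set.range (B i)) n := by
  have h := Set.range_list_prod_map (fun k => cascade B (n - k) n) id (List.range n)
    (by simpa using List.nodup_range)
  simp only [range_cascade] at h
  exact h

theorem range_squareOdd (n : ℕ) :
    Set.range (fun φ : (ℕ → ℕ → Θ) × (ℕ → ℕ → Θ) => squareOdd B n φ.1 φ.2) =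
      squareOddProd (fun i => Set.range (B i)) n := by
  have hupper := Set.range_list_prod_map (fun t => cascade B (n - 1 - 2 * t) n)
    (fun t => n - 1 - 2 * t) (List.range ((n - 1) / 2))
    (List.nodup_range.map_on fun x hx y hy h => by rw [List.mem_range] at hx hy; omega)
  have hlower := Set.range_list_prod_map (fun t => cascade B 1 (n - 2 * t))
    (fun t => n - 2 * t) (List.range ((n + 1) / 2))
    (List.nodup_range.map_on fun x hx y hy h => by rw [List.mem_range] at hx hy; omega)
  simp only [range_cascade] at hupper hlower
  rw [squareOddProd, ← hupper, ← hlower, ← Set.image2_mul, Set.image2_range]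
  rfl

end Blocks

theorem triangle_eq_square_odd_general {M Θ : Type*} [Monoid M] (B : ℕ → Θ → M)
    (hcomm : ∀ (i j : ℕ), 1 < Nat.dist i j → ∀ (α β : Θ),
      B i α * B j β = B j β * B i α)
    (hturnover : ∀ (i : ℕ) (α β γ : Θ), ∃ a b c : Θ,
      B i α * B (i + 1) β * B i γ = B (i + 1) a * B i b * B (i + 1) c)
    (hrevturnover : ∀ (i : ℕ) (a b c : Θ), ∃ α β γ : Θ,
      B (i + 1) a * B i b * B (i + 1) c = B i α * B (i + 1) β * B i γ)
    (n : ℕ) (hodd : Odd n) :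
    ∀ θ : ℕ → ℕ → Θ, ∃ φ₁ φ₂ : ℕ → ℕ → Θ,
      triangle B n θ = squareOdd B n φ₁ φ₂ := by
  intro θ
  have : Nonempty Θ := ⟨θ 0 0⟩
  have hbraid := satisfiesBraidRelations_range B hcomm hturnover hrevturnover
  have hsq : triangle B n θ ∈
      Set.range fun φ : (ℕ → ℕ → Θ) × (ℕ → ℕ → Θ) => squareOdd B n φ.1 φ.2 := by
    rw [range_squareOdd, ← hbraid.triangleProd_eq_squareOddProd hodd, ← range_triangle]
    exact Set.mem_range_self θ
  obtain ⟨⟨φ₁, φ₂⟩, h⟩ := hsq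
  exact ⟨φ₁, φ₂, h.symm⟩

/-- **Theorem (triangle to square, odd height).**  Let `B` be a family of blocks in a monoid
`M` (satisfying fusion, commutation and turnover) that additionally satisfies the reverse
turnover property, and let `n ≥ 1` be odd.  Then every triangle of height `n` equals a
square of height `n` (for a suitable choice of parameters). -/
theorem triangle_eq_square_odd {M Θ : Type*} [Monoid M] (B : ℕ → Θ → M)
    (hfusion : ∀ (i : ℕ) (α β : Θ), ∃ a : Θ, B i α * B i β = B i a)
    (hcomm : ∀ (i j : ℕ), 1 < Nat.dist i j → ∀ (α β : Θ),
      B i α * B j β = B j β * B i α)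
    (hturnover : ∀ (i : ℕ) (α β γ : Θ), ∃ a b c : Θ,
      B i α * B (i + 1) β * B i γ = B (i + 1) a * B i b * B (i + 1) c)
    (hrevturnover : ∀ (i : ℕ) (a b c : Θ), ∃ α β γ : Θ,
      B (i + 1) a * B i b * B (i + 1) c = B i α * B (i + 1) β * B i γ)
    (n : ℕ) (hn : 1 ≤ n) (hodd : Odd n) :
    ∀ θ : ℕ → ℕ → Θ, ∃ φ₁ φ₂ : ℕ → ℕ → Θ,
      triangle B n θ = squareOdd B n φ₁ φ₂ :=
  triangle_eq_square_odd_general B hcomm hturnover hrevturnover n hodd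
end

section
/- Let n ≥ 2 and let a_1, …, a_{n−1} and b_1, …, b_{n−1} be real numbers. On the 2^n-dimensional complex matrix space, define H_evenX := Σ_{even i, 1 ≤ i ≤ n−1} a_i · X_i X_{i+1} + Σ_{odd i, 1 ≤ i ≤ n−1} b_i · Y_i Y_{i+1} and H_oddX := Σ_{odd i, 1 ≤ i ≤ n−1} a_i · X_i X_{i+1} + Σ_{even i, 1 ≤ i ≤ n−1} b_i · Y_i Y_{i+1}. Then [H_evenX, H_oddX] = 0; that is, the XY-model Hamiltonian H = Σ_{i=1}^{n−1} (a_i X_i X_{i+1} + b_i Y_i Y_{i+1}) splits into two mutually commuting Kitaev chains. -/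
open Matrix

/-- The Pauli matrix `X`. -/
def PauliX : Matrix (Fin 2) (Fin 2) ℂ := !![0, 1; 1, 0]

/-- The Pauli matrix `Y`. -/
def PauliY : Matrix (Fin 2) (Fin 2) ℂ := !![0, -Complex.I; Complex.I, 0]

/-- For an `n`-qubit system and 1-indexed site `i`, `twoSite n P Q i` is the `2^n × 2^n`
matrix `P_i Q_{i+1}`, i.e. the `n`-fold Kronecker product with `P` in the `i`-th tensor
factor, `Q` in the `(i+1)`-th tensor factor, and 2×2 identities in all other factors.
(The tensor factor with 0-based index `k` corresponds to the 1-indexed site `k + 1`.) -/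
def twoSite (n : ℕ) (P Q : Matrix (Fin 2) (Fin 2) ℂ) (i : ℕ) :
    Matrix (Fin n → Fin 2) (Fin n → Fin 2) ℂ :=
  Matrix.of fun x y => ∏ k : Fin n,
    if (k : ℕ) + 1 = i then P (x k) (y k)
    else if (k : ℕ) = i then Q (x k) (y k)
    else if x k = y k then 1 else 0

/-
Each `twoSite n P Q i` is a Kronecker product of single-qubit factors, and two such products
commute as soon as their factors anticommute at an even number of sites and commute elsewhere.
An `X X` bond and a `Y Y` bond of equal parity either act on disjoint sites, or are the same
bond, where `X` and `Y` anticommute at exactly two sites. Bonds of the same kind always commute.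
Hence every term of `H_evenX` commutes with every term of `H_oddX`.
-/

open Finset

namespace Matrix

variable {R ι m : Type*} [CommRing R] [Fintype ι]

def piKron (M : ι → Matrix m m R) : Matrix (ι → m) (ι → m) R :=
  of fun x y => ∏ k, M k (x k) (y k)

theorem piKron_mul [DecidableEq ι] [Fintype m] [DecidableEq m] (M N : ι → Matrix m m R) :
    piKron M * piKron N = piKron fun k => M k * N k := by
  ext x z
  simp only [piKron, of_apply, mul_apply]
  rw [prod_univ_sum, Fintype.piFinset_univ]
  exact sum_congr rfl fun y _ => prod_mul_distrib.symm

theorem piKron_smul (c : ι → R) (M : ι → Matrix m m R) :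
    piKron (fun k => c k • M k) = (∏ k, c k) • piKron M := by
  ext x y
  simp [piKron, prod_mul_distrib]

theorem piKron_commute_of_anticommute_on [DecidableEq ι] [Fintype m] [DecidableEq m]
    {M N : ι → Matrix m m R} (S : Finset ι) (hS : Even #S)
    (hanti : ∀ k ∈ S, M k * N k = -(N k * M k))
    (hcomm : ∀ k ∉ S, Commute (M k) (N k)) :
    Commute (piKron M) (piKron N) := by
  have hfactor : ∀ k, M k * N k = (if k ∈ S then -1 else 1 : R) • (N k * M k) := by
    intro k
    split_ifs with hk
    · rw [hanti k hk, neg_one_smul]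
    · rw [one_smul, (hcomm k hk).eq]
  have hsign : ∏ k, (if k ∈ S then -1 else 1 : R) = 1 := by
    rw [Fintype.prod_ite_mem, prod_const, hS.neg_one_pow]
  change piKron M * piKron N = piKron N * piKron M
  rw [piKron_mul, piKron_mul, funext hfactor, piKron_smul, hsign, one_smul]

end Matrix

def twoSiteFactor (P Q : Matrix (Fin 2) (Fin 2) ℂ) (i k : ℕ) : Matrix (Fin 2) (Fin 2) ℂ :=
  if k + 1 = i then P else if k = i then Q else 1

theorem twoSite_eq_piKron (n : ℕ) (P Q : Matrix (Fin 2) (Fin 2) ℂ) (i : ℕ) :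
    twoSite n P Q i = piKron fun k : Fin n => twoSiteFactor P Q i k := by
  ext x y
  simp only [twoSite, piKron, of_apply]
  refine prod_congr rfl fun k _ => ?_
  simp only [twoSiteFactor]
  split_ifs <;> simp_all [one_apply]

theorem pauliX_mul_pauliY : PauliX * PauliY = -(PauliY * PauliX) := by
  ext i j
  fin_cases i <;> fin_cases j <;> simp [PauliX, PauliY, mul_apply, Fin.sum_univ_two]

theorem twoSite_commute_twoSite_of_eq (n : ℕ) (P : Matrix (Fin 2) (Fin 2) ℂ) (i j : ℕ) :
    Commute (twoSite n P P i) (twoSite n P P j) := by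
  rw [twoSite_eq_piKron, twoSite_eq_piKron]
  refine piKron_commute_of_anticommute_on ∅ (by simp) (by simp) fun k _ => ?_
  simp only [twoSiteFactor]
  split_ifs <;> simp

theorem twoSite_commute_twoSite_of_disjoint (n : ℕ) (P P' Q Q' : Matrix (Fin 2) (Fin 2) ℂ)
    {i j : ℕ} (hij : i ≠ j) (hij' : i ≠ j + 1) (hji : j ≠ i + 1) :
    Commute (twoSite n P P' i) (twoSite n Q Q' j) := by
  rw [twoSite_eq_piKron, twoSite_eq_piKron]
  refine piKron_commute_of_anticommute_on ∅ (by simp) (by simp) fun k _ => ?_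
  simp only [twoSiteFactor]
  split_ifs <;> first | simp | omega

theorem twoSite_commute_twoSite_of_anticommute {n : ℕ} {P Q : Matrix (Fin 2) (Fin 2) ℂ}
    (hPQ : P * Q = -(Q * P)) {i : ℕ} (hi : 1 ≤ i) (hin : i < n) :
    Commute (twoSite n P P i) (twoSite n Q Q i) := by
  rw [twoSite_eq_piKron, twoSite_eq_piKron]
  have hmem : ∀ k : Fin n, k ∈ ({⟨i - 1, by omega⟩, ⟨i, hin⟩} : Finset (Fin n)) ↔
      (k : ℕ) + 1 = i ∨ (k : ℕ) = i := by
    intro k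
    simp only [mem_insert, mem_singleton, Fin.ext_iff]
    omega
  refine piKron_commute_of_anticommute_on {⟨i - 1, by omega⟩, ⟨i, hin⟩} ?_ (fun k hk => ?_)
    fun k hk => ?_
  · rw [card_pair (by simp [Fin.ext_iff]; omega)]
    exact even_two
  · rcases (hmem k).1 hk with h | h <;> simp [twoSiteFactor, h, hPQ]
  · rw [hmem, not_or] at hk
    simp [twoSiteFactor, hk.1, hk.2]

theorem twoSite_pauliX_commute_twoSite_pauliY {n i j : ℕ} (hi : 1 ≤ i) (hin : i < n)
    (hij : Even (i + j)) :
    Commute (twoSite n PauliX PauliX i) (twoSite n PauliY PauliY j) := by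
  obtain rfl | hne := eq_or_ne i j
  · exact twoSite_commute_twoSite_of_anticommute pauliX_mul_pauliY hi hin
  · obtain ⟨r, hr⟩ := hij
    exact twoSite_commute_twoSite_of_disjoint n _ _ _ _ hne (by omega) (by omega)

theorem commute_sum_smul_sum_smul {α β K A : Type*} [CommSemiring K] [Semiring A] [Algebra K A]
    {s : Finset α} {t : Finset β} (c : α → K) (d : β → K) {f : α → A} {g : β → A}
    (h : ∀ i ∈ s, ∀ j ∈ t, Commute (f i) (g j)) :
    Commute (∑ i ∈ s, c i • f i) (∑ j ∈ t, d j • g j) :=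
  Commute.sum_left _ _ _ fun i hi => Commute.sum_right _ _ _ fun j hj =>
    ((h i hi j hj).smul_right _).smul_left _

theorem xy_model_commuting_kitaev_chains_general (n : ℕ) (a b : ℕ → ℝ) :
    let HevenX : Matrix (Fin n → Fin 2) (Fin n → Fin 2) ℂ :=
      ∑ i ∈ (Finset.Icc 1 (n - 1)).filter (fun i => Even i),
        (a i : ℂ) • twoSite n PauliX PauliX i +
      ∑ i ∈ (Finset.Icc 1 (n - 1)).filter (fun i => Odd i),
        (b i : ℂ) • twoSite n PauliY PauliY i
    let HoddX : Matrix (Fin n → Fin 2) (Fin n → Fin 2) ℂ :=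
      ∑ i ∈ (Finset.Icc 1 (n - 1)).filter (fun i => Odd i),
        (a i : ℂ) • twoSite n PauliX PauliX i +
      ∑ i ∈ (Finset.Icc 1 (n - 1)).filter (fun i => Even i),
        (b i : ℂ) • twoSite n PauliY PauliY i
    HevenX * HoddX - HoddX * HevenX = 0 := by
  intro HevenX HoddX
  refine sub_eq_zero_of_eq (Commute.add_left (Commute.add_right ?_ ?_)
    (Commute.add_right ?_ ?_)) <;>
    refine commute_sum_smul_sum_smul _ _ fun i hi j hj => ?_ <;>
    simp only [mem_filter, mem_Icc] at hi hj
  · exact twoSite_commute_twoSite_of_eq n PauliX i j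
  · exact twoSite_pauliX_commute_twoSite_pauliY hi.1.1 (by omega) (hi.2.add hj.2)
  · exact (twoSite_pauliX_commute_twoSite_pauliY hj.1.1 (by omega) (hj.2.add_odd hi.2)).symm
  · exact twoSite_commute_twoSite_of_eq n PauliY i j

/-- **The XY model splits into two commuting Kitaev chains.**
For `n ≥ 2` and real couplings `a_i`, `b_i`, the two Hamiltonians
`H_evenX = Σ_{even i} a_i X_i X_{i+1} + Σ_{odd i} b_i Y_i Y_{i+1}` and
`H_oddX  = Σ_{odd i} a_i X_i X_{i+1} + Σ_{even i} b_i Y_i Y_{i+1}`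
(sums over `1 ≤ i ≤ n−1`) commute: `[H_evenX, H_oddX] = 0`. -/
theorem xy_model_commuting_kitaev_chains (n : ℕ) (hn : 2 ≤ n) (a b : ℕ → ℝ) :
    let HevenX : Matrix (Fin n → Fin 2) (Fin n → Fin 2) ℂ :=
      ∑ i ∈ (Finset.Icc 1 (n - 1)).filter (fun i => Even i),
        (a i : ℂ) • twoSite n PauliX PauliX i +
      ∑ i ∈ (Finset.Icc 1 (n - 1)).filter (fun i => Odd i),
        (b i : ℂ) • twoSite n PauliY PauliY i
    let HoddX : Matrix (Fin n → Fin 2) (Fin n → Fin 2) ℂ :=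
      ∑ i ∈ (Finset.Icc 1 (n - 1)).filter (fun i => Odd i),
        (a i : ℂ) • twoSite n PauliX PauliX i +
      ∑ i ∈ (Finset.Icc 1 (n - 1)).filter (fun i => Even i),
        (b i : ℂ) • twoSite n PauliY PauliY i
    HevenX * HoddX - HoddX * HevenX = 0 :=
  xy_model_commuting_kitaev_chains_general n a b
end
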